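/- For all integers 1 ≤ j ≤ r, let P ∈ ℤ[q] be the polynomial determined by [2r−j]_q · P(q) = [j]_q · [2r−j choose r]_{q²} (such P exists). Then the polynomial P(−q), obtained by substituting q ↦ −q, has only nonnegative coefficients. (Equivalently, T_r^{(j)}(2r−j, −q) = q^{r²−r}·P(−q) is a positive polynomial for j ≤ r.) -/

import Mathlib

/-!
With `m = 2r - j`, the q-absorption identities `[m]_q [m-1 choose r-1]_q = [r]_q [m choose r]_q`
and `[m]_q [m-1 choose r]_q = [m-r]_q [m choose r]_q`, taken at `q²`, give
`P(q) = [m-1 choose r-1]_{q²} - q^j [m-1 choose r]_{q²}`.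
The substitution `q ↦ -q` only flips the sign of `q^j`. For odd `j`, `P(-q)` is therefore a sum of
Gaussian binomials in `q²` times powers of `q`; for even `j = 2a` it is the q-ballot difference
`[n choose k]_Q - Q^a [n choose k+1]_Q` at `Q = q²`, which has nonnegative coefficients by an
induction through the two q-Pascal recurrences.
-/

open Polynomial

/-- The q-integer `[n]_q = 1 + q + ⋯ + q^{n−1}` as a polynomial in `ℤ[q]`
(with `[0]_q = 0`). -/
noncomputable def qIntP (n : ℕ) : Polynomial ℤ := ∑ i ∈ Finset.range n, Polynomial.X ^ i

/-- The q-factorial `[n]_q! = [1]_q[2]_q⋯[n]_q` in `ℤ[q]`. -/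
noncomputable def qFactP (n : ℕ) : Polynomial ℤ := ∏ i ∈ Finset.range n, qIntP (i + 1)

/-- The Gaussian binomial coefficient `[m choose k]_q = [m]_q!/([k]_q![m−k]_q!)`
as a polynomial in `ℤ[q]` (the division, by a monic polynomial, is exact),
and `0` if `k > m`. -/
noncomputable def qBinomP (m k : ℕ) : Polynomial ℤ :=
  if k ≤ m then qFactP m /ₘ (qFactP k * qFactP (m - k)) else 0

/-- The Gaussian binomial coefficient `[m choose k]_{q²}`, i.e. `[m choose k]_q`
with `q` replaced by `q²`. -/
noncomputable def qBinomP2 (m k : ℕ) : Polynomial ℤ := (qBinomP m k).comp (Polynomial.X ^ 2)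

lemma qIntP_add (a b : ℕ) : qIntP (a + b) = qIntP a + X ^ a * qIntP b := by
  simp only [qIntP, Finset.sum_range_add, pow_add, Finset.mul_sum]

lemma qIntP_ne_zero {n : ℕ} (hn : n ≠ 0) : qIntP n ≠ 0 :=
  (monic_geom_sum_X hn).ne_zero

lemma qIntP_comp_X_sq_mul (n : ℕ) :
    (qIntP n).comp (X ^ 2) * (X ^ 2 - 1) = X ^ (2 * n) - 1 := by
  simp only [qIntP, sum_comp, X_pow_comp, geom_sum_mul, pow_mul]

lemma qFactP_succ (n : ℕ) : qFactP (n + 1) = qFactP n * qIntP (n + 1) :=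
  Finset.prod_range_succ _ _

lemma qFactP_monic (n : ℕ) : (qFactP n).Monic :=
  monic_prod_of_monic _ _ fun i _ => monic_geom_sum_X i.succ_ne_zero

noncomputable def gaussBinom : ℕ → ℕ → ℤ[X]
  | _, 0 => 1
  | 0, _ + 1 => 0
  | n + 1, k + 1 => gaussBinom n k + X ^ (k + 1) * gaussBinom n (k + 1)

@[simp] lemma gaussBinom_zero_right (n : ℕ) : gaussBinom n 0 = 1 := by cases n <;> rfl

lemma gaussBinom_succ_succ (n k : ℕ) :
    gaussBinom (n + 1) (k + 1) = gaussBinom n k + X ^ (k + 1) * gaussBinom n (k + 1) := rfl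

lemma gaussBinom_eq_zero_of_lt {n k : ℕ} (h : n < k) : gaussBinom n k = 0 := by
  induction n generalizing k with
  | zero => obtain ⟨k, rfl⟩ := Nat.exists_eq_succ_of_ne_zero h.ne'; rfl
  | succ n ih =>
    obtain ⟨k, rfl⟩ := Nat.exists_eq_succ_of_ne_zero (by omega : k ≠ 0)
    rw [gaussBinom_succ_succ, ih (by omega), ih (by omega), mul_zero, add_zero]

@[simp] lemma gaussBinom_self (n : ℕ) : gaussBinom n n = 1 := by
  induction n with
  | zero => rfl
  | succ n ih =>
    rw [gaussBinom_succ_succ, ih, gaussBinom_eq_zero_of_lt n.lt_succ_self, mul_zero, add_zero]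

lemma gaussBinom_add_mul_qFactP (a b : ℕ) :
    gaussBinom (a + b) a * (qFactP a * qFactP b) = qFactP (a + b) := by
  induction a generalizing b with
  | zero => simp [qFactP]
  | succ a iha =>
    induction b with
    | zero => simp [qFactP]
    | succ b ihb =>
      have hA := iha (b + 1)
      have hsum := qIntP_add (a + 1) (b + 1)
      rw [← add_assoc, qFactP_succ b] at hA
      rw [Nat.add_right_comm, qFactP_succ a] at ihb
      rw [show a + 1 + (b + 1) = a + b + 1 + 1 by ring] at hsum ⊢
      rw [gaussBinom_succ_succ, qFactP_succ (a + b + 1), qFactP_succ a, qFactP_succ b, hsum]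
      linear_combination qIntP (a + 1) * hA + X ^ (a + 1) * qIntP (b + 1) * ihb

lemma gaussBinom_symm {n a b : ℕ} (h : a + b = n) : gaussBinom n a = gaussBinom n b := by
  subst h
  have h := (gaussBinom_add_mul_qFactP a b).trans
    (add_comm a b ▸ gaussBinom_add_mul_qFactP b a).symm
  rw [mul_comm (qFactP b)] at h
  exact mul_right_cancel₀ ((qFactP_monic a).mul (qFactP_monic b)).ne_zero h

lemma qBinomP_eq_gaussBinom {m k : ℕ} (h : k ≤ m) : qBinomP m k = gaussBinom m k := by
  obtain ⟨b, rfl⟩ := Nat.exists_eq_add_of_le h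
  rw [qBinomP, if_pos h, Nat.add_sub_cancel_left, ← gaussBinom_add_mul_qFactP, mul_comm]
  exact mul_divByMonic_cancel_left _ ((qFactP_monic k).mul (qFactP_monic b))

lemma gaussBinom_succ_succ' (a b : ℕ) :
    gaussBinom (a + b + 1) (a + 1) = X ^ b * gaussBinom (a + b) a + gaussBinom (a + b) (a + 1) := by
  cases b with
  | zero => simp [gaussBinom_eq_zero_of_lt]
  | succ c =>
    rw [show a + (c + 1) = a + c + 1 by ring]
    calc gaussBinom (a + c + 1 + 1) (a + 1)
        = gaussBinom (a + c + 1 + 1) (c + 1) := gaussBinom_symm (by omega)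
      _ = gaussBinom (a + c + 1) c + X ^ (c + 1) * gaussBinom (a + c + 1) (c + 1) :=
        gaussBinom_succ_succ _ _
      _ = X ^ (c + 1) * gaussBinom (a + c + 1) a + gaussBinom (a + c + 1) (a + 1) := by
        rw [gaussBinom_symm (n := a + c + 1) (a := c) (b := a + 1) (by omega),
          gaussBinom_symm (n := a + c + 1) (a := c + 1) (b := a) (by omega), add_comm]

lemma qIntP_mul_gaussBinom (a b : ℕ) :
    qIntP (a + b + 1) * gaussBinom (a + b) a = qIntP (a + 1) * gaussBinom (a + b + 1) (a + 1) := by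
  have h := gaussBinom_add_mul_qFactP a b
  have h' := gaussBinom_add_mul_qFactP (a + 1) b
  rw [show a + 1 + b = a + b + 1 by ring, qFactP_succ (a + b), qFactP_succ a] at h'
  apply mul_right_cancel₀ ((qFactP_succ a ▸ qFactP_monic (a + 1)).mul (qFactP_monic b)).ne_zero
  linear_combination qIntP (a + b + 1) * qIntP (a + 1) * h - qIntP (a + 1) * h'

lemma qIntP_mul_gaussBinom' (a b : ℕ) :
    qIntP (a + b + 1) * gaussBinom (a + b) (a + 1) = qIntP b * gaussBinom (a + b + 1) (a + 1) := by
  cases b with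
  | zero => simp [qIntP, gaussBinom_eq_zero_of_lt]
  | succ c =>
    rw [show a + (c + 1) = c + (a + 1) by ring,
      gaussBinom_symm (n := c + (a + 1)) (a := a + 1) (b := c) (by omega),
      gaussBinom_symm (n := c + (a + 1) + 1) (a := a + 1) (b := c + 1) (by omega)]
    exact qIntP_mul_gaussBinom c (a + 1)

lemma qIntP_mul_gaussBinom_comp_X_sq_sub {k d j : ℕ} (h : d + j = k + 1) :
    qIntP (k + d + 1) * ((gaussBinom (k + d) k).comp (X ^ 2)
        - X ^ j * (gaussBinom (k + d) (k + 1)).comp (X ^ 2))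
      = qIntP j * (gaussBinom (k + d + 1) (k + 1)).comp (X ^ 2) := by
  have hA := congrArg (·.comp (X ^ 2)) (qIntP_mul_gaussBinom k d)
  have hB := congrArg (·.comp (X ^ 2)) (qIntP_mul_gaussBinom' k d)
  simp only [mul_comp] at hA hB
  have sm := qIntP_comp_X_sq_mul (k + d + 1)
  have sk := qIntP_comp_X_sq_mul (k + 1)
  have sd := qIntP_comp_X_sq_mul d
  have gm : qIntP (k + d + 1) * (X - 1) = X ^ (k + d + 1) - 1 := geom_sum_mul X _
  have gj : qIntP j * (X - 1) = X ^ j - 1 := geom_sum_mul X _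
  have e1 : (X : ℤ[X]) ^ (2 * (k + 1)) = X ^ j * X ^ (k + d + 1) := by
    rw [← pow_add]; congr 1; omega
  have e2 : (X : ℤ[X]) ^ j * X ^ (2 * d) = X ^ (k + d + 1) := by
    rw [← pow_add]; congr 1; omega
  have hne : (X - 1) * (X ^ (k + d + 1) + 1 : ℤ[X]) ≠ 0 :=
    mul_ne_zero (X_sub_C_ne_zero 1) (X_pow_add_C_ne_zero (by omega) 1)
  apply mul_right_cancel₀ hne
  set A := (gaussBinom (k + d) k).comp (X ^ 2)
  set B := (gaussBinom (k + d) (k + 1)).comp (X ^ 2)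
  set C := (gaussBinom (k + d + 1) (k + 1)).comp (X ^ 2)
  linear_combination (A - X ^ j * B) * (X ^ (k + d + 1) + 1) * gm
    - (A - X ^ j * B) * sm + (X ^ 2 - 1) * hA - X ^ j * (X ^ 2 - 1) * hB
    + C * sk - X ^ j * C * sd + C * e1 - C * e2 - C * (X ^ (k + d + 1) + 1) * gj

namespace Polynomial

lemma comp_mem_lifts {R S : Type*} [CommSemiring R] [CommSemiring S] {f : R →+* S} {p q : S[X]}
    (hp : p ∈ lifts f) (hq : q ∈ lifts f) : p.comp q ∈ lifts f := by
  obtain ⟨p, rfl⟩ := (mem_lifts _).1 hp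
  obtain ⟨q, rfl⟩ := (mem_lifts _).1 hq
  exact (mem_lifts _).2 ⟨p.comp q, map_comp f p q⟩

lemma coeff_nonneg_of_mem_lifts {p : ℤ[X]} (hp : p ∈ lifts (Nat.castRingHom ℤ)) (i : ℕ) :
    0 ≤ p.coeff i := by
  obtain ⟨n, hn⟩ := (lifts_iff_coeff_lifts p).1 hp i
  rw [← hn]
  exact n.cast_nonneg

end Polynomial

section NonnegCoeffs

-- Integer polynomials with nonnegative coefficients are exactly the images of `ℕ[X]`.
local notation "ℕ↑" => lifts (Nat.castRingHom ℤ)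

lemma gaussBinom_mem_lifts (n k : ℕ) : gaussBinom n k ∈ ℕ↑ := by
  induction n generalizing k with
  | zero => cases k <;> simp [gaussBinom, zero_mem, one_mem]
  | succ n ih =>
    cases k with
    | zero => simp [one_mem]
    | succ k => exact add_mem (ih k) (mul_mem (X_pow_mem_lifts _ _) (ih (k + 1)))

noncomputable def qBallot (n k a : ℕ) : ℤ[X] := gaussBinom n k - X ^ a * gaussBinom n (k + 1)

lemma qBallot_succ_succ (n k a : ℕ) :
    qBallot (n + 1) (k + 1) a = qBallot n k a + X ^ (k + 1) * qBallot n (k + 1) (a + 1) := by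
  simp only [qBallot, gaussBinom_succ_succ]
  ring

lemma qBallot_succ_succ' (k d a : ℕ) :
    qBallot (k + d + 1) (k + 1) (a + 1)
      = X ^ d * qBallot (k + d) k a + qBallot (k + d) (k + 1) (a + 1) := by
  cases d with
  | zero => simp [qBallot, gaussBinom_eq_zero_of_lt]
  | succ d =>
    rw [qBallot, qBallot, qBallot, gaussBinom_succ_succ' k (d + 1),
      show k + (d + 1) + 1 = k + 1 + d + 1 by ring, gaussBinom_succ_succ' (k + 1) d,
      show k + 1 + d = k + (d + 1) by ring]
    ring

lemma qBallot_mem_lifts {k d a : ℕ} (h : a + d ≤ k + 1) : qBallot (k + d) k a ∈ ℕ↑ := by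
  induction k generalizing d a with
  | zero =>
    obtain rfl | ⟨rfl, rfl⟩ : d = 0 ∨ d = 1 ∧ a = 0 := by omega
    · simp [qBallot, gaussBinom_eq_zero_of_lt, one_mem]
    · simp [qBallot, zero_mem]
  | succ k ih =>
    induction d generalizing a with
    | zero => simp [qBallot, gaussBinom_eq_zero_of_lt, one_mem]
    | succ d ihd =>
      have ihd' {a} (h' : a + d ≤ k + 2) : qBallot (k + (d + 1)) (k + 1) a ∈ ℕ↑ :=
        (show k + 1 + d = k + (d + 1) by ring) ▸ ihd h'
      rw [show k + 1 + (d + 1) = k + (d + 1) + 1 by ring]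
      -- The first recurrence keeps the exponent `a` on a term with a tighter bound, so when the
      -- bound is attained we use the second one, which lowers `a`.
      rcases Nat.lt_or_ge (a + d) (k + 1) with hlt | hge
      · rw [qBallot_succ_succ]
        exact add_mem (ih (by omega)) (mul_mem (X_pow_mem_lifts _ _) (ihd' (by omega)))
      · cases a with
        | zero =>
          rw [qBallot, gaussBinom_symm (n := k + (d + 1) + 1) (a := k + 1) (b := k + 2) (by omega),
            pow_zero, one_mul, sub_self]
          exact zero_mem _
        | succ a =>
          rw [qBallot_succ_succ']
          exact add_mem (mul_mem (X_pow_mem_lifts _ _) (ih (by omega))) (ihd' (by omega))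

end NonnegCoeffs

/-- For `1 ≤ j ≤ r`, let `P ∈ ℤ[q]` be the polynomial determined by
`[2r−j]_q·P(q) = [j]_q·[2r−j choose r]_{q²}` (such `P` exists). Then `P(−q)`
has only nonnegative coefficients; equivalently
`T_r^{(j)}(2r−j,−q) = q^{r²−r}·P(−q)` is a positive polynomial for `j ≤ r`. -/
theorem Trj_at_neg_q_nonneg (r j : ℕ) (hj : 1 ≤ j) (hjr : j ≤ r) (P : Polynomial ℤ)
    (hP : qIntP (2 * r - j) * P = qIntP j * qBinomP2 (2 * r - j) r) :
    ∀ i : ℕ, 0 ≤ (P.comp (-Polynomial.X)).coeff i := by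
  obtain ⟨k, rfl⟩ : ∃ k, r = k + 1 := ⟨r - 1, by omega⟩
  obtain ⟨d, hd⟩ : ∃ d, d + j = k + 1 := ⟨k + 1 - j, by omega⟩
  rw [show 2 * (k + 1) - j = k + d + 1 by omega] at hP
  have hP' : P = (gaussBinom (k + d) k).comp (X ^ 2)
      - X ^ j * (gaussBinom (k + d) (k + 1)).comp (X ^ 2) := by
    apply mul_left_cancel₀ (qIntP_ne_zero (k + d).succ_ne_zero)
    rw [hP, qBinomP2, qBinomP_eq_gaussBinom (by omega), qIntP_mul_gaussBinom_comp_X_sq_sub hd]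
  have hsq (p : ℤ[X]) : (p.comp (X ^ 2)).comp (-X) = p.comp (X ^ 2) := by
    rw [comp_assoc, X_pow_comp, neg_sq]
  apply coeff_nonneg_of_mem_lifts
  rw [hP', sub_comp, mul_comp, hsq, hsq, X_pow_comp]
  obtain ⟨a, rfl | rfl⟩ := Nat.even_or_odd' j
  · rw [pow_mul, neg_sq, ← X_pow_comp (p := (X : ℤ[X]) ^ 2) (k := a), ← mul_comp,
      ← sub_comp]
    exact comp_mem_lifts (qBallot_mem_lifts (by omega)) (X_pow_mem_lifts _ 2)
  · rw [Odd.neg_pow ⟨a, rfl⟩, neg_mul, sub_neg_eq_add]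
    have hG (n k : ℕ) := comp_mem_lifts (gaussBinom_mem_lifts n k) (X_pow_mem_lifts _ 2)
    exact add_mem (hG _ _) (mul_mem (X_pow_mem_lifts _ _) (hG _ _))
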